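/- Let k be a field, A a finite-dimensional k-algebra, W a finite-dimensional A-module, and N a simple A-module with projective cover π_N : P_N → N. If φ : W → N is a nonzero A-module homomorphism that factors through some projective A-module (i.e. φ = b ∘ a with a : W → P, b : P → N, P projective), then W has a direct summand isomorphic to P_N: there is a split surjection W → P_N. -/

import Mathlib

/-
A nonzero map `φ : W → N` into the simple module `N` is onto. Lifting its projective factor
`P → N` along `π_N` gives `ρ : W → P_N` with `π_N ∘ ρ = φ`, so `range ρ + ker π_N = P_N`.
As `ker π_N` lies in the radical, hence in every maximal submodule of the finitely generated
module `P_N`, Nakayama's lemma makes `ρ` onto, and projectivity of `P_N` splits it.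
-/

/-- The radical `rad(M) = J(A)·M` of a module `M` over a ring `A`. -/
def moduleRadical (A : Type) [Ring A] (M : Type) [AddCommGroup M] [Module A M] :
    Submodule A M :=
  (Ideal.jacobson (⊥ : Ideal A)) • (⊤ : Submodule A M)

open LinearMap Function

theorem moduleRadical_le_jacobson (A M : Type) [Ring A] [AddCommGroup M] [Module A M] :
    moduleRadical A M ≤ Module.jacobson A M := by
  rw [moduleRadical, Ideal.jacobson_bot]
  exact Ring.jacobson_smul_top_le A M

section Nakayama

variable {R M N W : Type*} [Ring R] [AddCommGroup M] [Module R M] [AddCommGroup N] [Module R N]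
  [AddCommGroup W] [Module R W]

theorem Submodule.eq_top_of_sup_jacobson_eq_top [Module.Finite R M] {L : Submodule R M}
    (h : L ⊔ Module.jacobson R M = ⊤) : L = ⊤ := by
  obtain hL | ⟨m, hm, hLm⟩ := IsCoatomic.eq_top_or_exists_le_coatom L
  · exact hL
  · exact absurd (top_le_iff.mp (h ▸ sup_le hLm (sInf_le hm))) hm.1

theorem LinearMap.surjective_of_surjective_comp_of_ker_le_jacobson [Module.Finite R M]
    {f : M →ₗ[R] N} (hker : ker f ≤ Module.jacobson R M) {g : W →ₗ[R] M}
    (hfg : Surjective (f ∘ₗ g)) : Surjective g := by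
  have hf : range f = ⊤ := range_eq_top.2 (Surjective.of_comp hfg)
  have hsup : range g ⊔ ker f = ⊤ := by
    rw [← LinearMap.map_eq_top_iff hf, ← range_comp, range_eq_top.2 hfg]
  exact range_eq_top.1 <| Submodule.eq_top_of_sup_jacobson_eq_top <|
    top_le_iff.mp (hsup ▸ sup_le_sup_left hker _)

end Nakayama

theorem LinearMap.exists_rightInverse_of_projectiveCover {R P N W Q : Type*} [Ring R]
    [AddCommGroup P] [Module R P] [Module.Projective R P] [Module.Finite R P]
    [AddCommGroup N] [Module R N] [IsSimpleModule R N] [AddCommGroup W] [Module R W]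
    [AddCommGroup Q] [Module R Q] [Module.Projective R Q]
    {π : P →ₗ[R] N} (hπ : Surjective π) (hker : ker π ≤ Module.jacobson R P)
    (a : W →ₗ[R] Q) (b : Q →ₗ[R] N) (hba : b ∘ₗ a ≠ 0) :
    ∃ (ρ : W →ₗ[R] P) (σ : P →ₗ[R] W), ρ ∘ₗ σ = LinearMap.id := by
  obtain ⟨c, hc⟩ := Module.projective_lifting_property π b hπ
  have hρ : Surjective (c ∘ₗ a) := by
    refine surjective_of_surjective_comp_of_ker_le_jacobson hker ?_
    rw [← comp_assoc, hc]
    exact surjective_of_ne_zero hba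
  obtain ⟨σ, hσ⟩ := Module.projective_lifting_property (c ∘ₗ a) LinearMap.id hρ
  exact ⟨c ∘ₗ a, σ, hσ⟩

theorem stmt12_general
    (k : Type) [Field k] (A : Type) [Ring A] [Algebra k A]
    (N : Type) [AddCommGroup N] [Module A N]
    (hN : IsSimpleModule A N)
    (PN : Type) [AddCommGroup PN] [Module A PN] [Module k PN] [IsScalarTower k A PN]
    [FiniteDimensional k PN]
    (hPN : Module.Projective A PN)
    (πN : PN →ₗ[A] N) (hπN : Function.Surjective πN)
    (hkerN : LinearMap.ker πN ≤ moduleRadical A PN)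
    (W : Type) [AddCommGroup W] [Module A W]
    (φ : W →ₗ[A] N) (hφ : φ ≠ 0)
    (hfactor : ∃ P : ModuleCat.{0} A, Module.Projective A P ∧
      ∃ (a : W →ₗ[A] P) (b : ↥P →ₗ[A] N), φ = b ∘ₗ a) :
    ∃ (ρ : W →ₗ[A] PN) (σ : PN →ₗ[A] W), ρ ∘ₗ σ = LinearMap.id := by
  obtain ⟨P, hP, a, b, rfl⟩ := hfactor
  have : Module.Finite A PN := Module.Finite.of_restrictScalars_finite k A PN
  exact exists_rightInverse_of_projectiveCover hπN
    (hkerN.trans (moduleRadical_le_jacobson A PN)) a b hφ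

/-- Let `N` be simple with projective cover `π_N : P_N → N`.
If `φ : W → N` is a nonzero homomorphism factoring through some projective
module, then `W` has a direct summand isomorphic to `P_N`: there is a split
surjection `W → P_N`. -/
theorem stmt12
    (k : Type) [Field k] (A : Type) [Ring A] [Algebra k A] [FiniteDimensional k A]
    (N : Type) [AddCommGroup N] [Module A N] [Module k N] [IsScalarTower k A N]
    [FiniteDimensional k N]
    (hN : IsSimpleModule A N)
    (PN : Type) [AddCommGroup PN] [Module A PN] [Module k PN] [IsScalarTower k A PN]
    [FiniteDimensional k PN]
    (hPN : Module.Projective A PN)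
    (πN : PN →ₗ[A] N) (hπN : Function.Surjective πN)
    (hkerN : LinearMap.ker πN ≤ moduleRadical A PN)
    (W : Type) [AddCommGroup W] [Module A W] [Module k W] [IsScalarTower k A W]
    [FiniteDimensional k W]
    (φ : W →ₗ[A] N) (hφ : φ ≠ 0)
    (hfactor : ∃ P : ModuleCat.{0} A, Module.Projective A P ∧
      ∃ (a : W →ₗ[A] P) (b : ↥P →ₗ[A] N), φ = b ∘ₗ a) :
    ∃ (ρ : W →ₗ[A] PN) (σ : PN →ₗ[A] W), ρ ∘ₗ σ = LinearMap.id :=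
  stmt12_general k A N hN PN hPN πN hπN hkerN W φ hφ hfactor
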